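/- arXiv:2408.00345 — 3 statements merged into one kernel-verified Lean document; each statement's English description precedes it below -/
import Mathlib

section
/- Let N ≥ 2 be an integer and let c = (c_i)_{0≤i≤N} be a differentiable solution of the N-truncated isolated DGED system on an interval I ⊆ ℝ. Then for every sequence (g_i)_{i≥0} of real numbers and every t ∈ I, d/dt ∑_{i=0}^N g_i c_i(t) = ∑_{k=1}^{N−1} ∑_{i=k}^{N} ∑_{j=0}^{N−k} (g_{j+k} + g_{i−k} − g_j − g_i) a(i,j;k) c_i(t) c_j(t). -/
/-!
Each of the four gain/loss operators, tested against `g` and summed over `i`, becomes a sum of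
`a(i,j;k) c_i c_j` over the single index set `1 ≤ k ≤ i ≤ N, 0 ≤ j ≤ N - k`, weighted by
`g (i - k)`, `-g j`, `g (j + k)` and `-g i` respectively; this is a reindexing of triangular
double sums. For `k = N` the only term has `i = N`, `j = 0`, whose weight
`g N + g 0 - g 0 - g N` vanishes, so the outer sum stops at `N - 1`.
-/

open Finset

/-- Truncated operator `Q^N_{1,i}`. -/
noncomputable def QN1 (a : ℕ → ℕ → ℕ → ℝ) (N : ℕ) (c : ℕ → ℝ) (i : ℕ) : ℝ :=
  ∑ k ∈ Finset.Icc 1 (N - i), ∑ j ∈ Finset.Icc 0 (N - k), a (i + k) j k * c (i + k) * c j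

/-- Truncated operator `Q^N_{2,i}`. -/
noncomputable def QN2 (a : ℕ → ℕ → ℕ → ℝ) (N : ℕ) (c : ℕ → ℝ) (i : ℕ) : ℝ :=
  -∑ k ∈ Finset.Icc 1 (N - i), ∑ j ∈ Finset.Icc k N, a j i k * c j * c i

/-- Truncated operator `Q^N_{3,i}`. -/
noncomputable def QN3 (a : ℕ → ℕ → ℕ → ℝ) (N : ℕ) (c : ℕ → ℝ) (i : ℕ) : ℝ :=
  ∑ k ∈ Finset.Icc 1 i, ∑ j ∈ Finset.Icc k N, a j (i - k) k * c j * c (i - k)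

/-- Truncated operator `Q^N_{4,i}`. -/
noncomputable def QN4 (a : ℕ → ℕ → ℕ → ℝ) (N : ℕ) (c : ℕ → ℝ) (i : ℕ) : ℝ :=
  -∑ k ∈ Finset.Icc 1 i, ∑ j ∈ Finset.Icc 0 (N - k), a i j k * c j * c i

/-- `c` is a solution of the `N`-truncated isolated DGED system on the set `I`. -/
def IsTruncSolIso (a : ℕ → ℕ → ℕ → ℝ) (N : ℕ) (I : Set ℝ) (c : ℕ → ℝ → ℝ) : Prop :=
  ∀ t ∈ I,
    HasDerivAt (c 0) (QN1 a N (fun n => c n t) 0 + QN2 a N (fun n => c n t) 0) t ∧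
    (∀ i, 1 ≤ i → i ≤ N - 1 →
      HasDerivAt (c i)
        (QN1 a N (fun n => c n t) i + QN2 a N (fun n => c n t) i +
          QN3 a N (fun n => c n t) i + QN4 a N (fun n => c n t) i) t) ∧
    HasDerivAt (c N) (QN3 a N (fun n => c n t) N + QN4 a N (fun n => c n t) N) t

section Reindex

variable {M : Type*} [AddCommMonoid M] (N : ℕ) (f : ℕ → ℕ → M)

theorem sum_range_sum_Icc_tsub_shift :
    ∑ i ∈ range (N + 1), ∑ k ∈ Icc 1 (N - i), f (i + k) k
      = ∑ k ∈ Icc 1 N, ∑ i ∈ Icc k N, f i k := by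
  rw [sum_sigma', sum_sigma']
  refine sum_nbij' (fun p => ⟨p.2, p.1 + p.2⟩) (fun q => ⟨q.2 - q.1, q.1⟩) ?_ ?_ ?_ ?_ ?_ <;>
    rintro ⟨x, y⟩ h <;> simp_all [mem_sigma] <;> omega

theorem sum_range_sum_Icc_tsub_comm :
    ∑ j ∈ range (N + 1), ∑ k ∈ Icc 1 (N - j), f j k
      = ∑ k ∈ Icc 1 N, ∑ j ∈ Icc 0 (N - k), f j k :=
  sum_comm' fun j k => by simp only [mem_range, mem_Icc]; omega

theorem sum_range_sum_Icc_self_shift :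
    ∑ i ∈ range (N + 1), ∑ k ∈ Icc 1 i, f (i - k) k
      = ∑ k ∈ Icc 1 N, ∑ j ∈ Icc 0 (N - k), f j k := by
  rw [sum_sigma', sum_sigma']
  refine sum_nbij' (fun p => ⟨p.2, p.1 - p.2⟩) (fun q => ⟨q.2 + q.1, q.1⟩) ?_ ?_ ?_ ?_ ?_ <;>
    rintro ⟨x, y⟩ h <;> simp_all [mem_sigma] <;> omega

theorem sum_range_sum_Icc_self_comm :
    ∑ i ∈ range (N + 1), ∑ k ∈ Icc 1 i, f i k
      = ∑ k ∈ Icc 1 N, ∑ i ∈ Icc k N, f i k :=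
  sum_comm' fun i k => by simp only [mem_range, mem_Icc]; omega

end Reindex

section Moments

variable (a : ℕ → ℕ → ℕ → ℝ) (N : ℕ) (c g : ℕ → ℝ)

@[simp] theorem QN1_self : QN1 a N c N = 0 := by simp [QN1]

@[simp] theorem QN2_self : QN2 a N c N = 0 := by simp [QN2]

@[simp] theorem QN3_zero : QN3 a N c 0 = 0 := by simp [QN3]

@[simp] theorem QN4_zero : QN4 a N c 0 = 0 := by simp [QN4]

theorem sum_mul_QN1 :
    ∑ i ∈ range (N + 1), g i * QN1 a N c i
      = ∑ k ∈ Icc 1 N, ∑ i ∈ Icc k N, ∑ j ∈ Icc 0 (N - k), g (i - k) * a i j k * c i * c j := by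
  rw [← sum_range_sum_Icc_tsub_shift]
  refine sum_congr rfl fun i _ => ?_
  simp only [QN1, mul_sum, Nat.add_sub_cancel, mul_assoc]

theorem sum_mul_QN2 :
    ∑ i ∈ range (N + 1), g i * QN2 a N c i
      = -∑ k ∈ Icc 1 N, ∑ i ∈ Icc k N, ∑ j ∈ Icc 0 (N - k), g j * a i j k * c i * c j := by
  simp_rw [sum_comm (s := Icc _ N) (t := Icc 0 _)]
  rw [← sum_range_sum_Icc_tsub_comm, ← sum_neg_distrib]
  refine sum_congr rfl fun i _ => ?_
  simp only [QN2, mul_neg, mul_sum, mul_assoc]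

theorem sum_mul_QN3 :
    ∑ i ∈ range (N + 1), g i * QN3 a N c i
      = ∑ k ∈ Icc 1 N, ∑ i ∈ Icc k N, ∑ j ∈ Icc 0 (N - k), g (j + k) * a i j k * c i * c j := by
  simp_rw [sum_comm (s := Icc _ N) (t := Icc 0 _)]
  rw [← sum_range_sum_Icc_self_shift]
  refine sum_congr rfl fun i _ => ?_
  rw [QN3, mul_sum]
  refine sum_congr rfl fun k hk => ?_
  rw [mul_sum, Nat.sub_add_cancel (mem_Icc.mp hk).2]
  simp only [mul_assoc]

theorem sum_mul_QN4 :
    ∑ i ∈ range (N + 1), g i * QN4 a N c i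
      = -∑ k ∈ Icc 1 N, ∑ i ∈ Icc k N, ∑ j ∈ Icc 0 (N - k), g i * a i j k * c i * c j := by
  rw [← sum_range_sum_Icc_self_comm, ← sum_neg_distrib]
  refine sum_congr rfl fun i _ => ?_
  simp only [QN4, mul_neg, mul_sum]
  exact congrArg _ (sum_congr rfl fun _ _ => sum_congr rfl fun _ _ => by ring)

theorem sum_mul_QN_sum :
    ∑ i ∈ range (N + 1), g i * (QN1 a N c i + QN2 a N c i + QN3 a N c i + QN4 a N c i)
      = ∑ k ∈ Icc 1 (N - 1), ∑ i ∈ Icc k N, ∑ j ∈ Icc 0 (N - k),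
          (g (j + k) + g (i - k) - g j - g i) * a i j k * c i * c j := by
  have hsplit : ∑ i ∈ range (N + 1), g i * (QN1 a N c i + QN2 a N c i + QN3 a N c i + QN4 a N c i)
      = ∑ k ∈ Icc 1 N, ∑ i ∈ Icc k N, ∑ j ∈ Icc 0 (N - k),
          (g (j + k) + g (i - k) - g j - g i) * a i j k * c i * c j := by
    simp only [mul_add, sum_add_distrib]
    rw [sum_mul_QN1, sum_mul_QN2, sum_mul_QN3, sum_mul_QN4, ← sub_eq_add_neg, ← sub_eq_add_neg]
    simp only [← sum_sub_distrib, ← sum_add_distrib]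
    refine sum_congr rfl fun k _ => sum_congr rfl fun i _ => sum_congr rfl fun j _ => ?_
    ring
  rw [hsplit]
  cases N with
  | zero => rfl
  | succ m => simp [sum_Icc_succ_top]

end Moments

theorem IsTruncSolIso.hasDerivAt {a : ℕ → ℕ → ℕ → ℝ} {N : ℕ} {I : Set ℝ} {c : ℕ → ℝ → ℝ}
    (hc : IsTruncSolIso a N I c) {t : ℝ} (ht : t ∈ I) {i : ℕ} (hi : i ≤ N) :
    HasDerivAt (c i)
      (QN1 a N (fun n => c n t) i + QN2 a N (fun n => c n t) i +
        QN3 a N (fun n => c n t) i + QN4 a N (fun n => c n t) i) t := by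
  obtain ⟨h0, hmid, hN⟩ := hc t ht
  rcases eq_or_ne i 0 with rfl | hi0
  · simpa using h0
  rcases eq_or_ne i N with rfl | hiN
  · simpa using hN
  exact hmid i (by omega) (by omega)

theorem truncated_isolated_moment_identity_general
    (a : ℕ → ℕ → ℕ → ℝ)
    (N : ℕ) (I : Set ℝ) (c : ℕ → ℝ → ℝ)
    (hc : IsTruncSolIso a N I c)
    (g : ℕ → ℝ) (t : ℝ) (ht : t ∈ I) :
    HasDerivAt (fun s => ∑ i ∈ Finset.range (N + 1), g i * c i s)
      (∑ k ∈ Finset.Icc 1 (N - 1), ∑ i ∈ Finset.Icc k N, ∑ j ∈ Finset.Icc 0 (N - k),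
        (g (j + k) + g (i - k) - g j - g i) * a i j k * c i t * c j t) t := by
  rw [← sum_mul_QN_sum]
  exact HasDerivAt.fun_sum fun i hi =>
    (hc.hasDerivAt ht (Nat.lt_succ_iff.mp (mem_range.mp hi))).const_mul (g i)

/-- Proposition 4.1: the evolution of generalized moments for the truncated isolated system. -/
theorem truncated_isolated_moment_identity
    (a : ℕ → ℕ → ℕ → ℝ) (ha : ∀ i j k, 0 ≤ a i j k)
    (hzero : ∀ p : ℕ, 1 ≤ p → a p 0 p = 0)
    (N : ℕ) (hN : 2 ≤ N) (I : Set ℝ) (c : ℕ → ℝ → ℝ)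
    (hc : IsTruncSolIso a N I c)
    (g : ℕ → ℝ) (t : ℝ) (ht : t ∈ I) :
    HasDerivAt (fun s => ∑ i ∈ Finset.range (N + 1), g i * c i s)
      (∑ k ∈ Finset.Icc 1 (N - 1), ∑ i ∈ Finset.Icc k N, ∑ j ∈ Finset.Icc 0 (N - k),
        (g (j + k) + g (i - k) - g j - g i) * a i j k * c i t * c j t) t :=
  truncated_isolated_moment_identity_general a N I c hc g t ht
end

section
/- Let σ : [0,∞) → ℝ be convex with σ(0) = 0, and suppose m_σ ≥ 0 is a constant such that (x+y)(σ(x+y) − σ(x) − σ(y)) ≤ m_σ (x σ(y) + y σ(x)) for all real x ≥ 0 and y ≥ 1. Then for all positive integers i, j, k with k ≤ i, (j+k)(σ(i−k) + σ(j+k) − σ(i) − σ(j)) ≤ m_σ (j σ(k) + k σ(j)). -/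
/-!
Convexity with `σ 0 = 0` makes `σ` superadditive on `[0, ∞)`, so `σ (i - k) - σ i ≤ -σ k`.
The left-hand side is therefore at most `(j + k) (σ (j + k) - σ j - σ k)`, which is the
hypothesis at `x = k`, `y = j`.
-/

section Superadditive

variable {𝕜 E β : Type*} [Field 𝕜] [LinearOrder 𝕜] [IsStrictOrderedRing 𝕜]
  [AddCommMonoid β] [PartialOrder β] [Module 𝕜 β]

theorem ConvexOn.map_smul_le_smul [AddCommMonoid E] [Module 𝕜 E] {s : Set E} {f : E → β}
    (hf : ConvexOn 𝕜 s f) (hs : (0 : E) ∈ s) (hf0 : f 0 = 0) {x : E} (hx : x ∈ s) {t : 𝕜}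
    (ht₀ : 0 ≤ t) (ht₁ : t ≤ 1) : f (t • x) ≤ t • f x := by
  simpa [hf0] using hf.2 hx hs ht₀ (sub_nonneg.2 ht₁) (add_sub_cancel t 1)

theorem ConvexOn.superadditive_of_map_zero [IsOrderedAddMonoid β] {f : 𝕜 → β}
    (hf : ConvexOn 𝕜 (Set.Ici 0) f) (hf0 : f 0 = 0) {a b : 𝕜} (ha : 0 ≤ a) (hb : 0 ≤ b) : f a + f b ≤ f (a + b) := by
  rcases (add_nonneg ha hb).eq_or_lt with hab | hab
  · obtain ⟨rfl, rfl⟩ := (add_eq_zero_iff_of_nonneg ha hb).1 hab.symm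
    simp [hf0]
  have hle : ∀ c, 0 ≤ c → c ≤ a + b → f c ≤ (c / (a + b)) • f (a + b) := fun c hc hcab => by
    simpa [div_mul_cancel₀ c hab.ne'] using
      hf.map_smul_le_smul Set.self_mem_Ici hf0 (Set.mem_Ici.2 hab.le) (div_nonneg hc hab.le)
        ((div_le_one hab).2 hcab)
  calc f a + f b ≤ (a / (a + b)) • f (a + b) + (b / (a + b)) • f (a + b) :=
        add_le_add (hle a ha (le_add_of_nonneg_right hb)) (hle b hb (le_add_of_nonneg_left ha))
    _ = f (a + b) := by rw [← add_smul, ← add_div, div_self hab.ne', one_smul]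

end Superadditive

theorem sigma_exchange_inequality_general
    (σ : ℝ → ℝ) (hconv : ConvexOn ℝ (Set.Ici 0) σ) (h0 : σ 0 = 0)
    (m : ℝ)
    (hineq : ∀ x y : ℝ, 0 ≤ x → 1 ≤ y →
      (x + y) * (σ (x + y) - σ x - σ y) ≤ m * (x * σ y + y * σ x)) :
    ∀ i j k : ℕ, 1 ≤ i → 1 ≤ j → 1 ≤ k → k ≤ i →
      ((j : ℝ) + k) * (σ ((i : ℝ) - k) + σ ((j : ℝ) + k) - σ i - σ j)
        ≤ m * ((j : ℝ) * σ k + (k : ℝ) * σ j) := by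
  intro i j k _ hj _ hki
  have hsplit : σ ((i : ℝ) - k) + σ k ≤ σ i := by
    simpa using hconv.superadditive_of_map_zero h0
      (sub_nonneg.2 (Nat.cast_le.2 hki)) (Nat.cast_nonneg (α := ℝ) k)
  have hexch := hineq k j k.cast_nonneg (Nat.one_le_cast.2 hj)
  rw [add_comm (k : ℝ)] at hexch
  calc ((j : ℝ) + k) * (σ ((i : ℝ) - k) + σ ((j : ℝ) + k) - σ i - σ j)
      ≤ ((j : ℝ) + k) * (σ ((j : ℝ) + k) - σ k - σ j) :=
        mul_le_mul_of_nonneg_left (by linarith) (by positivity)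
    _ ≤ m * ((k : ℝ) * σ j + j * σ k) := hexch
    _ = m * ((j : ℝ) * σ k + (k : ℝ) * σ j) := by ring

/-- Lemma 3.1: a convexity inequality for functions `σ` on `[0,∞)` with `σ(0) = 0`
satisfying `(x+y)(σ(x+y) − σ(x) − σ(y)) ≤ m (x σ(y) + y σ(x))`. -/
theorem sigma_exchange_inequality
    (σ : ℝ → ℝ) (hconv : ConvexOn ℝ (Set.Ici 0) σ) (h0 : σ 0 = 0)
    (m : ℝ) (hm : 0 ≤ m)
    (hineq : ∀ x y : ℝ, 0 ≤ x → 1 ≤ y →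
      (x + y) * (σ (x + y) - σ x - σ y) ≤ m * (x * σ y + y * σ x)) :
    ∀ i j k : ℕ, 1 ≤ i → 1 ≤ j → 1 ≤ k → k ≤ i →
      ((j : ℝ) + k) * (σ ((i : ℝ) - k) + σ ((j : ℝ) + k) - σ i - σ j)
        ≤ m * ((j : ℝ) * σ k + (k : ℝ) * σ j) :=
  sigma_exchange_inequality_general σ hconv h0 m hineq
end

section
/- Let σ : [0,∞) → ℝ be differentiable and convex with σ(0) = 0 and σ(r)/r → ∞ as r → ∞. Then there exist constants η > 0 and M₀ > 0 such that for every integer p ≥ M₀ and every integer k with 1 ≤ k ≤ p−1, σ(p) − σ(p−k) − σ(k) ≥ η σ(p−1)/(p−1). -/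
/-!
Convexity gives two facts. Moving the two points of a pair with fixed sum apart increases
`σ x + σ y`, so `σ (p - k) + σ k ≤ σ (p - 1) + σ 1`. Since `σ 0 = 0`, the secant slope of `σ`
on `[0, p - 1]` is at most its slope on `[p - 1, p]`, so `σ p - σ (p - 1) ≥ σ (p - 1) / (p - 1)`.
Hence `σ p - σ (p - k) - σ k ≥ σ (p - 1) / (p - 1) - σ 1`, and superlinear growth makes `σ 1`
at most half of `σ (p - 1) / (p - 1)` for large `p`.
-/

open Filter Set

theorem ConvexOn.map_add_map_le_of_add_eq {𝕜 : Type*} [Field 𝕜] [LinearOrder 𝕜]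
    [IsStrictOrderedRing 𝕜] {s : Set 𝕜} {f : 𝕜 → 𝕜} (hf : ConvexOn 𝕜 s f) {a b x y : 𝕜}
    (ha : a ∈ s) (hb : b ∈ s) (hax : a ≤ x) (hxb : x ≤ b) (hxy : x + y = a + b) :
    f x + f y ≤ f a + f b := by
  rcases hax.eq_or_lt with rfl | hax
  · rw [add_left_cancel hxy]
  have hab : 0 < b - a := by linarith
  have ht : 0 ≤ (b - x) / (b - a) := div_nonneg (by linarith) hab.le
  have hu : 0 ≤ (x - a) / (b - a) := div_nonneg (by linarith) hab.le
  have hsum : (b - x) / (b - a) + (x - a) / (b - a) = 1 := by field_simp; ring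
  have hx : (b - x) / (b - a) * a + (x - a) / (b - a) * b = x := by field_simp; ring
  have hy : (x - a) / (b - a) * a + (b - x) / (b - a) * b = y := by
    rw [eq_sub_of_add_eq' hxy]; field_simp; ring
  have hfx := hf.2 ha hb ht hu hsum
  have hfy := hf.2 ha hb hu ht (by rw [add_comm, hsum])
  simp only [smul_eq_mul, hx, hy] at hfx hfy
  linear_combination hfx + hfy + (f a + f b) * hsum

theorem ConvexOn.div_le_sub_of_map_zero {f : ℝ → ℝ} (hf : ConvexOn ℝ (Ici 0) f) (h0 : f 0 = 0)
    {x : ℝ} (hx : 0 < x) : f x / x ≤ f (x + 1) - f x := by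
  simpa [h0] using hf.slope_mono_adjacent self_mem_Ici (mem_Ici.2 (by linarith : 0 ≤ x + 1)) hx
    (lt_add_one x)

theorem sigma_lower_bound_general
    (σ : ℝ → ℝ)
    (hconv : ConvexOn ℝ (Set.Ici 0) σ)
    (h0 : σ 0 = 0)
    (hlim : Tendsto (fun r : ℝ => σ r / r) atTop atTop) :
    ∃ η : ℝ, 0 < η ∧ ∃ M₀ : ℝ, 0 < M₀ ∧
      ∀ p : ℕ, M₀ ≤ (p : ℝ) → ∀ k : ℕ, 1 ≤ k → k ≤ p - 1 →
        η * σ ((p : ℝ) - 1) / ((p : ℝ) - 1)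
          ≤ σ (p : ℝ) - σ ((p : ℝ) - k) - σ (k : ℝ) := by
  obtain ⟨M, hM⟩ := (hlim.eventually_ge_atTop (2 * σ 1)).exists_forall_of_atTop
  refine ⟨1 / 2, by norm_num, max (M + 1) 2, by positivity, ?_⟩
  intro p hp k hk hkp
  have hp2 : (2 : ℝ) ≤ p := le_of_max_le_right hp
  have hk1 : (1 : ℝ) ≤ k := by exact_mod_cast hk
  have hkp1 : (k : ℝ) + 1 ≤ p := by exact_mod_cast (by omega : k + 1 ≤ p)
  have hgrowth : 2 * σ 1 ≤ σ (p - 1) / (p - 1) := hM _ (by linarith [le_of_max_le_left hp])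
  have hslope : σ (p - 1) / (p - 1) ≤ σ p - σ (p - 1) := by
    simpa using hconv.div_le_sub_of_map_zero h0 (x := p - 1) (by linarith)
  have hspread : σ k + σ (p - k) ≤ σ 1 + σ (p - 1) :=
    hconv.map_add_map_le_of_add_eq (mem_Ici.2 zero_le_one) (mem_Ici.2 (by linarith)) hk1
      (by linarith) (by ring)
  rw [mul_div_assoc]
  linarith

/-- Lemma 3.2: for a differentiable convex `σ` on `[0,∞)` with `σ(0) = 0` and
`σ(r)/r → ∞`, there are `η > 0` and `M₀ > 0` such that for all integers `p ≥ M₀`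
and `1 ≤ k ≤ p − 1` one has `σ(p) − σ(p−k) − σ(k) ≥ η σ(p−1)/(p−1)`. -/
theorem sigma_lower_bound
    (σ : ℝ → ℝ)
    (hdiff : DifferentiableOn ℝ σ (Set.Ici 0))
    (hconv : ConvexOn ℝ (Set.Ici 0) σ)
    (h0 : σ 0 = 0)
    (hlim : Tendsto (fun r : ℝ => σ r / r) atTop atTop) :
    ∃ η : ℝ, 0 < η ∧ ∃ M₀ : ℝ, 0 < M₀ ∧
      ∀ p : ℕ, M₀ ≤ (p : ℝ) → ∀ k : ℕ, 1 ≤ k → k ≤ p - 1 →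
        η * σ ((p : ℝ) - 1) / ((p : ℝ) - 1)
          ≤ σ (p : ℝ) - σ ((p : ℝ) - k) - σ (k : ℝ) :=
  sigma_lower_bound_general σ hconv h0 hlim
end
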